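/- arXiv:1603.00640 — 5 statements merged into one kernel-verified Lean document; each statement's English description precedes it below -/
import Mathlib

section
/- Let M be a positive integer and B > 0. Let (ε_n)_{n≥0} be a sequence of nonnegative integers with ε_n ≤ B for all n, and set μ := ∑_{n=0}^{∞} 4^{-(n+1)} ε_n. Assume M·μ ∈ ℤ. Then μ = (1/M) · ⌈ M · ∑_{n=0}^{m} 4^{-(n+1)} ε_n ⌉, where m = ⌊ log(B·M/3) / log 4 ⌋. -/
/-!
The tail of the series after the first `m + 1` terms is at most `B / (3 · 4^(m+1))`, and the
choice of `m` makes `B · M / 3 < 4^(m+1)`, so `M` times the tail is less than `1`. Hence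
`M` times the partial sum lies in `(M μ - 1, M μ]`, and since `M μ` is an integer it is the
ceiling of `M` times the partial sum.
-/

open Finset

section GeometricTail

variable {r B : ℝ} {a : ℕ → ℝ}

theorem hasSum_div_pow_add_succ (hr : 1 < r) (B : ℝ) (N : ℕ) :
    HasSum (fun n : ℕ => B / r ^ (n + N + 1)) (B / ((r - 1) * r ^ N)) := by
  have hr0 : r ≠ 0 := by linarith
  have hr1 : r - 1 ≠ 0 := by linarith
  have hterm : (fun n : ℕ => B / r ^ (n + N + 1)) = fun n => B / r ^ (N + 1) * r⁻¹ ^ n := by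
    ext n
    rw [inv_pow, pow_add, pow_add]
    field_simp
    ring
  have hsum : B / ((r - 1) * r ^ N) = B / r ^ (N + 1) * (1 - r⁻¹)⁻¹ := by
    rw [pow_succ]
    field_simp
  rw [hterm, hsum]
  exact (hasSum_geometric_of_lt_one (by positivity) (inv_lt_one_of_one_lt₀ hr)).mul_left _

theorem summable_div_pow_succ (hr : 1 < r) (ha : ∀ n, 0 ≤ a n) (haB : ∀ n, a n ≤ B) :
    Summable fun n => a n / r ^ (n + 1) :=
  (hasSum_div_pow_add_succ hr B 0).summable.of_nonneg_of_le
    (fun n => div_nonneg (ha n) (pow_nonneg (by linarith) _))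
    (fun n => div_le_div_of_nonneg_right (haB n) (pow_nonneg (by linarith) _))

theorem tsum_sub_sum_range_div_pow_succ_le (hr : 1 < r) (ha : ∀ n, 0 ≤ a n)
    (haB : ∀ n, a n ≤ B) (N : ℕ) :
    ∑' n, a n / r ^ (n + 1) - ∑ n ∈ range N, a n / r ^ (n + 1) ≤ B / ((r - 1) * r ^ N) := by
  have hsum := summable_div_pow_succ hr ha haB
  rw [← hsum.sum_add_tsum_nat_add N, add_sub_cancel_left,
    ← (hasSum_div_pow_add_succ hr B N).tsum_eq]
  exact ((summable_nat_add_iff N).mpr hsum).tsum_le_tsum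
    (fun n => div_le_div_of_nonneg_right (haB _) (pow_nonneg (by linarith) _))
    (hasSum_div_pow_add_succ hr B N).summable

end GeometricTail

theorem Real.lt_pow_floor_logb_add_one {b x : ℝ} (hb : 1 < b) (hx : 0 < x) {m : ℕ}
    (hm : (m : ℤ) = ⌊Real.logb b x⌋) : x < b ^ (m + 1) := by
  rw [← Real.rpow_natCast, ← Real.logb_lt_iff_lt_rpow hb hx]
  have := Int.lt_floor_add_one (Real.logb b x)
  rw [← hm] at this
  exact_mod_cast this

theorem eq_ceil_mul_div_of_mul_sub_lt_one {M μ S : ℝ} (hM : 0 < M) {k : ℤ} (hk : M * μ = k)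
    (hS : S ≤ μ) (hlt : M * (μ - S) < 1) : μ = ⌈M * S⌉ / M := by
  have hceil : ⌈M * S⌉ = k := by
    rw [Int.ceil_eq_iff]
    constructor <;> nlinarith
  rw [hceil, ← hk]
  field_simp

theorem fast_algo_general
    (M : ℕ) (hM : 0 < M) (B : ℝ)
    (ε : ℕ → ℕ) (hεB : ∀ n, (ε n : ℝ) ≤ B)
    (μ : ℝ) (hμ : μ = ∑' n : ℕ, (ε n : ℝ) / 4 ^ (n + 1))
    (hint : ∃ k : ℤ, (M : ℝ) * μ = (k : ℝ))
    (hBM : 1 ≤ B * M / 3)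
    (m : ℕ) (hm : (m : ℤ) = ⌊Real.log (B * M / 3) / Real.log 4⌋) :
    μ = (⌈(M : ℝ) * ∑ n ∈ Finset.range (m + 1), (ε n : ℝ) / 4 ^ (n + 1)⌉ : ℤ) / M := by
  obtain ⟨k, hk⟩ := hint
  have hε : ∀ n, (0 : ℝ) ≤ ε n := fun n => Nat.cast_nonneg _
  have h4 : (1 : ℝ) < 4 := by norm_num
  have hpow : B * M / 3 < 4 ^ (m + 1) :=
    Real.lt_pow_floor_logb_add_one h4 (by linarith) (by rwa [Real.log_div_log] at hm)
  have htail := tsum_sub_sum_range_div_pow_succ_le h4 hε hεB (m + 1)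
  rw [← hμ] at htail
  refine eq_ceil_mul_div_of_mul_sub_lt_one (by exact_mod_cast hM) hk ?_ ?_
  · rw [hμ]
    exact (summable_div_pow_succ h4 hε hεB).sum_le_tsum _ (fun n _ => by positivity)
  · calc (M : ℝ) * (μ - ∑ n ∈ range (m + 1), (ε n : ℝ) / 4 ^ (n + 1))
        ≤ M * (B / ((4 - 1) * 4 ^ (m + 1))) := by gcongr
      _ = B * M / 3 / 4 ^ (m + 1) := by ring
      _ < 1 := (div_lt_one (by positivity)).mpr hpow

/-- Lemma "fast algo": if `ε : ℕ → ℕ` with `ε n ≤ B`, `μ = ∑ 4^{-(n+1)} ε_n`, and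
`M·μ ∈ ℤ`, then `μ` equals `(1/M)·⌈M·(partial sum up to m)⌉` where
`m = ⌊log(B·M/3)/log 4⌋` (assume `B·M/3 ≥ 1`). -/
theorem fast_algo
    (M : ℕ) (hM : 0 < M) (B : ℝ) (hB : 0 < B)
    (ε : ℕ → ℕ) (hεB : ∀ n, (ε n : ℝ) ≤ B)
    (μ : ℝ) (hμ : μ = ∑' n : ℕ, (ε n : ℝ) / 4 ^ (n + 1))
    (hint : ∃ k : ℤ, (M : ℝ) * μ = (k : ℝ))
    (hBM : 1 ≤ B * M / 3)
    (m : ℕ) (hm : (m : ℤ) = ⌊Real.log (B * M / 3) / Real.log 4⌋) :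
    μ = (⌈(M : ℝ) * ∑ n ∈ Finset.range (m + 1), (ε n : ℝ) / 4 ^ (n + 1)⌉ : ℤ) / M :=
  fast_algo_general M hM B ε hεB μ hμ hint hBM m hm
end

section
/- Let M ≥ 2 and B > 0, let (ε_n)_{n≥0} be nonnegative integers with ε_n ≤ B, let μ := ∑_{n=0}^∞ 4^{-(n+1)} ε_n, and suppose M'·μ ∈ ℤ for some integer 1 ≤ M' ≤ M. Set m := ⌊ log(B·M²/3) / log 4 ⌋ (assume B·M²/3 ≥ 1) and μ₀ := ∑_{n=0}^{m} 4^{-(n+1)} ε_n. Then μ ∈ [μ₀, μ₀ + 1/M²], and μ is the unique fraction with denominator at most M in this interval. -/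
/-!
Since `0 ≤ ε n ≤ B`, the tail of the series after index `m` is at most
`∑_{n > m} B / 4^(n+1) = B / (3·4^(m+1))`, and the choice of `m` gives `B·M²/3 < 4^(m+1)`,
so this is `< 1/M²` and `μ ∈ [μ₀, μ₀ + 1/M²)`. Two distinct fractions with denominators at most
`M` differ by at least `1 / lcm` of their denominators, and this lcm is `< M²` when `M ≥ 2`; hence
a closed interval of length `1/M²` contains at most one of them.
-/

open Finset

section TailBound

variable {r B : ℝ} {ε : ℕ → ℝ}

lemma summable_div_pow_succ_of_le (hr : 1 < r) (hε : ∀ n, 0 ≤ ε n) (hεB : ∀ n, ε n ≤ B) :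
    Summable fun n => ε n / r ^ (n + 1) := by
  have hgeom : Summable fun n : ℕ => B / r * r⁻¹ ^ n :=
    (summable_geometric_of_lt_one (by positivity) (inv_lt_one_of_one_lt₀ hr)).mul_left _
  refine hgeom.of_nonneg_of_le (fun n => div_nonneg (hε n) (by positivity)) fun n => ?_
  calc ε n / r ^ (n + 1) ≤ B / r ^ (n + 1) := by gcongr; exact hεB n
    _ = B / r * r⁻¹ ^ n := by rw [inv_pow, pow_succ']; ring

lemma tsum_div_pow_succ_le_sum_range_add (hr : 1 < r) (hε : ∀ n, 0 ≤ ε n) (hεB : ∀ n, ε n ≤ B)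
    (m : ℕ) :
    ∑' n, ε n / r ^ (n + 1) ≤
      ∑ n ∈ range (m + 1), ε n / r ^ (n + 1) + B / ((r - 1) * r ^ (m + 1)) := by
  have hs := summable_div_pow_succ_of_le hr hε hεB
  have hr0 : 0 < r := by linarith
  rw [← hs.sum_add_tsum_nat_add (m + 1)]
  gcongr
  calc ∑' n, ε (n + (m + 1)) / r ^ (n + (m + 1) + 1)
      ≤ ∑' n : ℕ, B / r ^ (m + 2) * r⁻¹ ^ n := by
        refine (summable_nat_add_iff (m + 1)).2 hs |>.tsum_le_tsum (fun n => ?_)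
          ((summable_geometric_of_lt_one (by positivity) (inv_lt_one_of_one_lt₀ hr)).mul_left _)
        calc ε (n + (m + 1)) / r ^ (n + (m + 1) + 1) ≤ B / r ^ (n + (m + 1) + 1) := by
              gcongr; exact hεB _
          _ = B / r ^ (m + 2) * r⁻¹ ^ n := by rw [inv_pow]; field_simp; ring
    _ = B / ((r - 1) * r ^ (m + 1)) := by
        rw [tsum_mul_left, tsum_geometric_of_lt_one (by positivity) (inv_lt_one_of_one_lt₀ hr)]
        have : r - 1 ≠ 0 := by linarith
        field_simp
        ring

end TailBound

lemma lt_pow_succ_of_eq_floor_log_div_log {b : ℕ} (hb : 1 < b) {x : ℝ} (hx : 0 ≤ x) {m : ℕ}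
    (hm : (m : ℤ) = ⌊Real.log x / Real.log b⌋) : x < (b : ℝ) ^ (m + 1) := by
  rw [Real.log_div_log, Real.floor_logb_natCast hx] at hm
  have := Int.lt_zpow_succ_log_self hb x
  rwa [← hm, ← Nat.cast_succ, zpow_natCast] at this

lemma Nat.lcm_lt_sq {a b M : ℕ} (hM : 2 ≤ M) (ha0 : 0 < a) (hb0 : 0 < b) (ha : a ≤ M)
    (hb : b ≤ M) : a.lcm b < M ^ 2 := by
  rcases eq_or_ne a b with rfl | hab
  · rw [Nat.lcm_self]; nlinarith
  · calc a.lcm b ≤ a * b := Nat.lcm_le_mul ha0 hb0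
      _ < M ^ 2 := by rcases hab.lt_or_gt with h | h <;> nlinarith

namespace Rat

lemma den_intCast_div_natCast_le (k : ℤ) {n : ℕ} (hn : 0 < n) : ((k : ℚ) / n).den ≤ n := by
  have := Rat.den_dvd k n
  rw [Rat.divInt_eq_div, Int.cast_natCast, Int.natCast_dvd_natCast] at this
  exact Nat.le_of_dvd hn this

lemma inv_den_le_abs {r : ℚ} (hr : r ≠ 0) : (r.den : ℚ)⁻¹ ≤ |r| := by
  have hnum : (1 : ℚ) ≤ |(r.num : ℚ)| := by exact_mod_cast Int.one_le_abs (Rat.num_ne_zero.2 hr)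
  conv_rhs => rw [← r.num_div_den, abs_div, Nat.abs_cast]
  rw [inv_eq_one_div]
  gcongr

lemma one_div_sq_lt_abs_sub {M : ℕ} (hM : 2 ≤ M) {q q' : ℚ} (hq : q.den ≤ M) (hq' : q'.den ≤ M)
    (hne : q ≠ q') : 1 / (M : ℚ) ^ 2 < |q - q'| := by
  have hlt : (q - q').den < M ^ 2 :=
    (Nat.le_of_dvd (Nat.lcm_pos q.den_pos q'.den_pos) (sub_den_dvd_lcm q q')).trans_lt
      (Nat.lcm_lt_sq hM q.den_pos q'.den_pos hq hq')
  calc 1 / (M : ℚ) ^ 2 < ((q - q').den : ℚ)⁻¹ := by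
        rw [one_div]; exact inv_strictAnti₀ (by positivity) (by exact_mod_cast hlt)
    _ ≤ |q - q'| := inv_den_le_abs (sub_ne_zero.2 hne)

lemma eq_of_den_le_of_mem_Icc {M : ℕ} (hM : 2 ≤ M) {q q' : ℚ} (hq : q.den ≤ M) (hq' : q'.den ≤ M)
    {a : ℝ} (hqa : (q : ℝ) ∈ Set.Icc a (a + 1 / (M : ℝ) ^ 2))
    (hq'a : (q' : ℝ) ∈ Set.Icc a (a + 1 / (M : ℝ) ^ 2)) : q = q' := by
  by_contra hne
  have hfar : 1 / (M : ℝ) ^ 2 < |(q : ℝ) - q'| := by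
    have := (Rat.cast_lt (K := ℝ)).2 (one_div_sq_lt_abs_sub hM hq hq' hne)
    push_cast at this
    exact this
  have hnear : |(q : ℝ) - q'| ≤ 1 / (M : ℝ) ^ 2 :=
    abs_sub_le_iff.2 ⟨by linarith [hqa.2, hq'a.1], by linarith [hqa.1, hq'a.2]⟩
  linarith

end Rat

theorem fast_algo2_general
    (M : ℕ) (hM : 2 ≤ M) (B : ℝ)
    (ε : ℕ → ℕ) (hεB : ∀ n, (ε n : ℝ) ≤ B)
    (μ : ℝ) (hμ : μ = ∑' n : ℕ, (ε n : ℝ) / 4 ^ (n + 1))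
    (M' : ℕ) (hM'1 : 1 ≤ M') (hM'2 : M' ≤ M)
    (hint : ∃ k : ℤ, (M' : ℝ) * μ = (k : ℝ))
    (m : ℕ) (hm : (m : ℤ) = ⌊Real.log (B * M ^ 2 / 3) / Real.log 4⌋)
    (μ₀ : ℝ) (hμ₀ : μ₀ = ∑ n ∈ Finset.range (m + 1), (ε n : ℝ) / 4 ^ (n + 1)) :
    (μ₀ ≤ μ ∧ μ ≤ μ₀ + 1 / (M : ℝ) ^ 2) ∧
      ∃ q : ℚ, (q : ℝ) = μ ∧ q.den ≤ M ∧
        ∀ q' : ℚ, q'.den ≤ M → μ₀ ≤ (q' : ℝ) → (q' : ℝ) ≤ μ₀ + 1 / (M : ℝ) ^ 2 →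
          q' = q := by
  have hε0 : ∀ n, (0 : ℝ) ≤ ε n := fun n => Nat.cast_nonneg _
  have hB0 : 0 ≤ B := (hε0 0).trans (hεB 0)
  have hpow : B * M ^ 2 / 3 < 4 ^ (m + 1) :=
    lt_pow_succ_of_eq_floor_log_div_log (b := 4) (by norm_num) (by positivity) (by simpa using hm)
  have htail : B / ((4 - 1) * 4 ^ (m + 1)) < 1 / (M : ℝ) ^ 2 := by
    rw [div_lt_div_iff₀ (by positivity) (by positivity)]
    linarith
  have hμ_mem : μ ∈ Set.Ico μ₀ (μ₀ + 1 / (M : ℝ) ^ 2) := by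
    subst hμ hμ₀
    refine ⟨(summable_div_pow_succ_of_le (by norm_num) hε0 hεB).sum_le_tsum _
      (fun n _ => by positivity), ?_⟩
    exact (tsum_div_pow_succ_le_sum_range_add (by norm_num) hε0 hεB m).trans_lt (by linarith)
  obtain ⟨k, hk⟩ := hint
  have hqμ : (((k : ℚ) / M' : ℚ) : ℝ) = μ := by
    push_cast
    rw [div_eq_iff (by positivity), ← hk, mul_comm]
  have hden : ((k : ℚ) / M').den ≤ M := (Rat.den_intCast_div_natCast_le k hM'1).trans hM'2
  refine ⟨⟨hμ_mem.1, hμ_mem.2.le⟩, _, hqμ, hden, fun q' hq' hlo hhi => ?_⟩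
  exact Rat.eq_of_den_le_of_mem_Icc hM hq' hden ⟨hlo, hhi⟩ (hqμ ▸ Set.Ico_subset_Icc_self hμ_mem)

/-- Lemma "fast algo 2": under a bound `M ≥ 2` on the denominator of
`μ = ∑ 4^{-(n+1)} ε_n` (integer-valued `ε_n ≤ B`), with
`m = ⌊log(B·M²/3)/log 4⌋` and `μ₀` the partial sum up to `m`, one has
`μ ∈ [μ₀, μ₀ + 1/M²]`, and `μ` is the unique fraction with denominator at most `M`
in this interval. -/
theorem fast_algo2
    (M : ℕ) (hM : 2 ≤ M) (B : ℝ) (hB : 0 < B)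
    (ε : ℕ → ℕ) (hεB : ∀ n, (ε n : ℝ) ≤ B)
    (μ : ℝ) (hμ : μ = ∑' n : ℕ, (ε n : ℝ) / 4 ^ (n + 1))
    (M' : ℕ) (hM'1 : 1 ≤ M') (hM'2 : M' ≤ M)
    (hint : ∃ k : ℤ, (M' : ℝ) * μ = (k : ℝ))
    (hBM : 1 ≤ B * M ^ 2 / 3)
    (m : ℕ) (hm : (m : ℤ) = ⌊Real.log (B * M ^ 2 / 3) / Real.log 4⌋)
    (μ₀ : ℝ) (hμ₀ : μ₀ = ∑ n ∈ Finset.range (m + 1), (ε n : ℝ) / 4 ^ (n + 1)) :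
    (μ₀ ≤ μ ∧ μ ≤ μ₀ + 1 / (M : ℝ) ^ 2) ∧
      ∃ q : ℚ, (q : ℝ) = μ ∧ q.den ≤ M ∧
        ∀ q' : ℚ, q'.den ≤ M → μ₀ ≤ (q' : ℝ) → (q' : ℝ) ≤ μ₀ + 1 / (M : ℝ) ^ 2 →
          q' = q :=
  fast_algo2_general M hM B ε hεB μ hμ M' hM'1 hM'2 hint m hm μ₀ hμ₀
end

section
/- Let G be an abelian group, e : G → ℝ a bounded function, and q : G × G → ℝ a bounded function satisfying, for all P, Q ∈ G, q(2P, 2Q) - 4·q(P, Q) = e(P+Q) + e(P-Q) - 2·e(P) - 2·e(Q). Assume the series μ(P) := ∑_{n=0}^∞ 4^{-(n+1)} e(2ⁿP) converges for every P. Then μ(P+Q) + μ(P-Q) - 2·μ(P) - 2·μ(Q) = -q(P,Q) for all P, Q ∈ G. -/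
/-- Abstract form of the μ–ε relation: if `e : G → ℝ` and `q : G × G → ℝ` are bounded
and satisfy `q(2P,2Q) - 4·q(P,Q) = e(P+Q) + e(P-Q) - 2·e(P) - 2·e(Q)`, and
`μ(P) = ∑_{n≥0} 4^{-(n+1)} e(2ⁿP)` converges for every `P`, then
`μ(P+Q) + μ(P-Q) - 2μ(P) - 2μ(Q) = -q(P,Q)`. -/
theorem mu_eps_relation
    {G : Type*} [AddCommGroup G]
    (e : G → ℝ) (q : G × G → ℝ)
    (Ce : ℝ) (hCe : ∀ P : G, |e P| ≤ Ce)
    (Cq : ℝ) (hCq : ∀ P Q : G, |q (P, Q)| ≤ Cq)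
    (hrel : ∀ P Q : G,
      q (2 • P, 2 • Q) - 4 * q (P, Q)
        = e (P + Q) + e (P - Q) - 2 * e P - 2 * e Q)
    (μ : G → ℝ)
    (hμ : ∀ P : G, HasSum (fun n : ℕ => e ((2 ^ n : ℕ) • P) / 4 ^ (n + 1)) (μ P)) :
    ∀ P Q : G, μ (P + Q) + μ (P - Q) - 2 * μ P - 2 * μ Q = -q (P, Q) := by
  intro P Q
  set f : ℕ → ℝ := fun n => q ((2 ^ n : ℕ) • P, (2 ^ n : ℕ) • Q) / 4 ^ n with hf
  -- combined HasSum
  have h1 := (((hμ (P + Q)).add (hμ (P - Q))).sub ((hμ P).mul_left 2)).sub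
      ((hμ Q).mul_left 2)
  have hgf : (fun n : ℕ =>
      e ((2 ^ n : ℕ) • (P + Q)) / 4 ^ (n + 1) + e ((2 ^ n : ℕ) • (P - Q)) / 4 ^ (n + 1)
        - 2 * (e ((2 ^ n : ℕ) • P) / 4 ^ (n + 1)) - 2 * (e ((2 ^ n : ℕ) • Q) / 4 ^ (n + 1)))
      = fun n => f (n + 1) - f n := by
    funext n
    have h2P : (2 ^ (n + 1) : ℕ) • P = 2 • ((2 ^ n : ℕ) • P) := by
      rw [smul_smul, ← pow_succ']
    have h2Q : (2 ^ (n + 1) : ℕ) • Q = 2 • ((2 ^ n : ℕ) • Q) := by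
      rw [smul_smul, ← pow_succ']
    simp only [hf, h2P, h2Q, smul_add, smul_sub]
    have h4 : (4 : ℝ) ^ (n + 1) ≠ 0 := by positivity
    linear_combination -(hrel ((2 ^ n : ℕ) • P) ((2 ^ n : ℕ) • Q)) / 4 ^ (n + 1)
  rw [hgf] at h1
  have htendsto := h1.tendsto_sum_nat
  simp only [Finset.sum_range_sub] at htendsto
  -- f n → 0
  have hf0 : Filter.Tendsto f Filter.atTop (nhds 0) := by
    apply squeeze_zero_norm (a := fun n => Cq * (1 / 4) ^ n)
    · intro n
      have : ‖f n‖ = |q ((2 ^ n : ℕ) • P, (2 ^ n : ℕ) • Q)| / 4 ^ n := by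
        rw [hf]
        rw [Real.norm_eq_abs, abs_div]
        congr 1
        simp [abs_of_pos, pow_pos]
      rw [this]
      rw [div_le_iff₀ (by positivity)]
      calc |q ((2 ^ n : ℕ) • P, (2 ^ n : ℕ) • Q)| ≤ Cq := hCq _ _
        _ = Cq * (1 / 4) ^ n * 4 ^ n := by
            rw [mul_assoc, ← mul_pow]
            norm_num
    · have : Filter.Tendsto (fun n : ℕ => ((1 : ℝ) / 4) ^ n) Filter.atTop (nhds 0) :=
        tendsto_pow_atTop_nhds_zero_of_lt_one (by norm_num) (by norm_num)
      simpa using this.const_mul Cq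
  have hlim : Filter.Tendsto (fun n => f n - f 0) Filter.atTop (nhds (0 - f 0)) :=
    hf0.sub_const (f 0)
  have := tendsto_nhds_unique htendsto hlim
  rw [this]
  simp [hf]
end

section
/- Let m₁, m₂, m₃ ≥ 1, set M := m₁m₂ + m₁m₃ + m₂m₃, and let 0 ≤ i ≤ m₁ and 0 ≤ j ≤ m₂. In the 'theta graph' obtained by joining two vertices A and E by three internally disjoint paths of lengths m₁, m₂, m₃ (with unit resistance per edge), the effective resistance between the vertex B_i at distance i from A along the first path and the vertex C_j at distance j from A along the second path equals ( m₂·i·(m₁-i) + m₃·(i+j)·(m₁-i+m₂-j) + m₁·j·(m₂-j) ) / M. -/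
lemma seg_aux (f : ℤ → ℝ) (a b : ℤ)
    (h : ∀ t : ℤ, a < t → t < b → 2 * f t - f (t - 1) - f (t + 1) = 0) :
    ∀ n : ℕ, a + n ≤ b → f (a + n) = f a + (n : ℝ) * (f (a + 1) - f a) := by
  intro n
  induction n using Nat.strong_induction_on with
  | _ n ih =>
    match n with
    | 0 => intro _; norm_num
    | 1 => intro _; norm_num
    | (n+2) =>
      intro hb
      have hb' : a + ((n:ℤ) + 2) ≤ b := by push_cast at hb; omega
      have h0 := ih n (by omega) (by omega)
      have h1 := ih (n+1) (by omega) (by push_cast; omega)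
      have hr := h (a + ((n:ℕ)+1 : ℕ)) (by push_cast; omega) (by push_cast; omega)
      have e0 : (a + (((n:ℕ)+1 : ℕ) : ℤ)) - 1 = a + (n : ℕ) := by push_cast; ring
      have e2 : (a + (((n:ℕ)+1 : ℕ) : ℤ)) + 1 = a + ((n+2 : ℕ) : ℤ) := by push_cast; ring
      rw [e0, e2] at hr
      linear_combination (norm := (push_cast; ring)) 2*h1 - h0 - hr

lemma seg (f : ℤ → ℝ) (a b : ℤ)
    (h : ∀ t : ℤ, a < t → t < b → 2 * f t - f (t - 1) - f (t + 1) = 0)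
    (t : ℤ) (ht1 : a ≤ t) (ht2 : t ≤ b) :
    f t = f a + ((t : ℝ) - (a : ℝ)) * (f (a + 1) - f a) := by
  have h2 := seg_aux f a b h (t - a).toNat (by omega)
  rw [show a + (((t - a).toNat : ℕ) : ℤ) = t by omega] at h2
  rw [show (((t - a).toNat : ℕ) : ℝ) = (t : ℝ) - (a : ℝ) by
    rw [← Int.cast_natCast, Int.toNat_of_nonneg (by omega : (0:ℤ) ≤ t - a)]; push_cast; ring] at h2
  exact h2



/-- Effective resistance in the theta graph: two vertices `A`, `E` joined by three
internally disjoint paths of lengths `m₁, m₂, m₃` (unit resistance per edge).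
If `g` (encoded by its restrictions `g₁, g₂, g₃` to the three paths, parametrized
by distance from `A`) solves the Laplacian equation `L g = e_{B_i} - e_{C_j}`,
where `B_i` is at distance `i` from `A` on path 1 and `C_j` at distance `j` from `A`
on path 2, then the effective resistance
`r(B_i, C_j) = g(B_i) - g(C_j) = (m₂·i·(m₁-i) + m₃·(i+j)·(m₁-i+m₂-j) + m₁·j·(m₂-j))/M`
with `M = m₁m₂ + m₁m₃ + m₂m₃`. -/
theorem theta_graph_resistance
    (m₁ m₂ m₃ i j : ℤ)
    (hm₁ : 1 ≤ m₁) (hm₂ : 1 ≤ m₂) (hm₃ : 1 ≤ m₃)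
    (hi0 : 0 ≤ i) (hi1 : i ≤ m₁) (hj0 : 0 ≤ j) (hj1 : j ≤ m₂)
    (g₁ g₂ g₃ : ℤ → ℝ)
    -- the three paths share the vertex A (parameter 0) and the vertex E (parameter mₖ)
    (hA1 : g₁ 0 = g₂ 0) (hA2 : g₂ 0 = g₃ 0)
    (hE1 : g₁ m₁ = g₂ m₂) (hE2 : g₂ m₂ = g₃ m₃)
    -- Laplacian equations at the interior vertices of the three paths
    (hint1 : ∀ t : ℤ, 0 < t → t < m₁ →
      2 * g₁ t - g₁ (t - 1) - g₁ (t + 1) = if t = i then 1 else 0)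
    (hint2 : ∀ t : ℤ, 0 < t → t < m₂ →
      2 * g₂ t - g₂ (t - 1) - g₂ (t + 1) = -(if t = j then 1 else 0))
    (hint3 : ∀ t : ℤ, 0 < t → t < m₃ →
      2 * g₃ t - g₃ (t - 1) - g₃ (t + 1) = 0)
    -- Laplacian equation at A
    (hA : (g₁ 0 - g₁ 1) + (g₂ 0 - g₂ 1) + (g₃ 0 - g₃ 1)
      = (if i = 0 then 1 else 0) - (if j = 0 then 1 else 0))
    -- Laplacian equation at E
    (hE : (g₁ m₁ - g₁ (m₁ - 1)) + (g₂ m₂ - g₂ (m₂ - 1)) + (g₃ m₃ - g₃ (m₃ - 1))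
      = (if i = m₁ then 1 else 0) - (if j = m₂ then 1 else 0)) :
    g₁ i - g₂ j
      = ((m₂ : ℝ) * i * ((m₁ : ℝ) - i) + (m₃ : ℝ) * ((i : ℝ) + j) * (((m₁ : ℝ) - i) + ((m₂ : ℝ) - j))
          + (m₁ : ℝ) * j * ((m₂ : ℝ) - j))
        / ((m₁ : ℝ) * m₂ + (m₁ : ℝ) * m₃ + (m₂ : ℝ) * m₃) := by
  
  have hm1R : (0:ℝ) < (m₁:ℝ) := by exact_mod_cast (by omega : (0:ℤ) < m₁)
  have hm2R : (0:ℝ) < (m₂:ℝ) := by exact_mod_cast (by omega : (0:ℤ) < m₂)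
  have hm3R : (0:ℝ) < (m₃:ℝ) := by exact_mod_cast (by omega : (0:ℤ) < m₃)
  have hM : (m₁:ℝ) * m₂ + (m₁:ℝ) * m₃ + (m₂:ℝ) * m₃ ≠ 0 := by positivity
  -- value of g₁ at i
  have F1 : g₁ i = g₁ 0 + (i:ℝ) * (g₁ 1 - g₁ 0) := by
    rcases eq_or_lt_of_le hi0 with h | h
    · rw [← h]; norm_num
    · have hs := seg g₁ 0 i
        (fun t h1 h2 => by
          have h3 := hint1 t h1 (by omega); rwa [if_neg (by omega)] at h3)
        i h.le le_rfl
      norm_num at hs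
      exact hs
  -- value of g₂ at j
  have F2 : g₂ j = g₂ 0 + (j:ℝ) * (g₂ 1 - g₂ 0) := by
    rcases eq_or_lt_of_le hj0 with h | h
    · rw [← h]; norm_num
    · have hs := seg g₂ 0 j
        (fun t h1 h2 => by
          have h3 := hint2 t h1 (by omega); rwa [if_neg (by omega), neg_zero] at h3)
        j h.le le_rfl
      norm_num at hs
      exact hs
  -- value of g₁ at m₁
  have G1m : g₁ m₁ = g₁ 0 + (m₁:ℝ) * (g₁ 1 - g₁ 0)
      - ((m₁:ℝ) - i) * (1 - (if i = 0 then (1:ℝ) else 0)) := by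
    by_cases h0 : i = 0
    · rw [if_pos h0]
      have hs := seg g₁ 0 m₁
        (fun t h1 h2 => by
          have h3 := hint1 t h1 h2; rwa [if_neg (by omega)] at h3)
        m₁ (by omega) le_rfl
      norm_num at hs
      linear_combination hs
    · rw [if_neg h0]
      rcases eq_or_lt_of_le hi1 with h1 | h1
      · rw [← h1]
        linear_combination F1
      · have hs2 := seg g₁ i m₁
          (fun t ht1 ht2 => by
            have h3 := hint1 t (by omega) ht2; rwa [if_neg (by omega)] at h3)
          m₁ (by omega) le_rfl
        have hm1 := seg g₁ 0 i
          (fun t ht1 ht2 => by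
            have h3 := hint1 t ht1 (by omega); rwa [if_neg (by omega)] at h3)
          (i - 1) (by omega) (by omega)
        norm_num at hm1
        push_cast at hm1
        have hq := hint1 i (by omega) h1
        rw [if_pos rfl] at hq
        linear_combination hs2 - ((m₁:ℝ) - i) * hq + F1 + ((m₁:ℝ) - i) * (F1 - hm1)
  -- value of g₂ at m₂
  have G2m : g₂ m₂ = g₂ 0 + (m₂:ℝ) * (g₂ 1 - g₂ 0)
      + ((m₂:ℝ) - j) * (1 - (if j = 0 then (1:ℝ) else 0)) := by
    by_cases h0 : j = 0
    · rw [if_pos h0]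
      have hs := seg g₂ 0 m₂
        (fun t h1 h2 => by
          have h3 := hint2 t h1 h2; rwa [if_neg (by omega), neg_zero] at h3)
        m₂ (by omega) le_rfl
      norm_num at hs
      linear_combination hs
    · rw [if_neg h0]
      rcases eq_or_lt_of_le hj1 with h1 | h1
      · rw [← h1]
        linear_combination F2
      · have hs2 := seg g₂ j m₂
          (fun t ht1 ht2 => by
            have h3 := hint2 t (by omega) ht2; rwa [if_neg (by omega), neg_zero] at h3)
          m₂ (by omega) le_rfl
        have hm1 := seg g₂ 0 j
          (fun t ht1 ht2 => by
            have h3 := hint2 t ht1 (by omega); rwa [if_neg (by omega), neg_zero] at h3)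
          (j - 1) (by omega) (by omega)
        norm_num at hm1
        push_cast at hm1
        have hq := hint2 j (by omega) h1
        rw [if_pos rfl] at hq
        linear_combination hs2 - ((m₂:ℝ) - j) * hq + F2 + ((m₂:ℝ) - j) * (F2 - hm1)
  -- value of g₃ at m₃
  have G3m : g₃ m₃ = g₃ 0 + (m₃:ℝ) * (g₃ 1 - g₃ 0) := by
    have hs := seg g₃ 0 m₃ (fun t h1 h2 => hint3 t h1 h2) m₃ (by omega) le_rfl
    norm_num at hs
    exact hs
  -- current equations
  have EA : (m₁:ℝ) * (g₁ 1 - g₁ 0) - ((m₁:ℝ) - i) * (1 - (if i = 0 then (1:ℝ) else 0))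
      = (m₃:ℝ) * (g₃ 1 - g₃ 0) := by
    linear_combination -G1m + G3m + hE1 + hE2 - hA1 - hA2
  have EB : (m₂:ℝ) * (g₂ 1 - g₂ 0) + ((m₂:ℝ) - j) * (1 - (if j = 0 then (1:ℝ) else 0))
      = (m₃:ℝ) * (g₃ 1 - g₃ 0) := by
    linear_combination -G2m + G3m + hE2 - hA2
  have EC : (g₁ 1 - g₁ 0) + (g₂ 1 - g₂ 0) + (g₃ 1 - g₃ 0)
      = (if j = 0 then (1:ℝ) else 0) - (if i = 0 then (1:ℝ) else 0) := by
    linear_combination -hA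
  have hip : (i:ℝ) * (if i = 0 then (1:ℝ) else 0) = 0 := by
    by_cases h : i = 0 <;> simp [h]
  have hjq : (j:ℝ) * (if j = 0 then (1:ℝ) else 0) = 0 := by
    by_cases h : j = 0 <;> simp [h]
  have hd3 : ((m₁:ℝ) * m₂ + (m₁:ℝ) * m₃ + (m₂:ℝ) * m₃) * (g₃ 1 - g₃ 0)
      = (m₂:ℝ) * i - (m₁:ℝ) * j := by
    linear_combination ((m₁:ℝ) * m₂) * EC - (m₂:ℝ) * EA - (m₁:ℝ) * EB
      - (m₂:ℝ) * hip + (m₁:ℝ) * hjq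
  have hid1 : (m₁:ℝ) * ((i:ℝ) * (g₁ 1 - g₁ 0))
      = (i:ℝ) * m₃ * (g₃ 1 - g₃ 0) + (i:ℝ) * ((m₁:ℝ) - i) := by
    linear_combination (i:ℝ) * EA - ((m₁:ℝ) - i) * hip
  have hjd2 : (m₂:ℝ) * ((j:ℝ) * (g₂ 1 - g₂ 0))
      = (j:ℝ) * m₃ * (g₃ 1 - g₃ 0) - (j:ℝ) * ((m₂:ℝ) - j) := by
    linear_combination (j:ℝ) * EB + ((m₂:ℝ) - j) * hjq
  have key : (m₁:ℝ) * ((m₂:ℝ) * (((i:ℝ) * (g₁ 1 - g₁ 0) - (j:ℝ) * (g₂ 1 - g₂ 0))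
        * ((m₁:ℝ) * m₂ + (m₁:ℝ) * m₃ + (m₂:ℝ) * m₃)))
      = (m₁:ℝ) * ((m₂:ℝ) * ((m₂ : ℝ) * i * ((m₁ : ℝ) - i)
        + (m₃ : ℝ) * ((i : ℝ) + j) * (((m₁ : ℝ) - i) + ((m₂ : ℝ) - j))
        + (m₁ : ℝ) * j * ((m₂ : ℝ) - j))) := by
    linear_combination ((m₂:ℝ) * ((m₁:ℝ) * m₂ + (m₁:ℝ) * m₃ + (m₂:ℝ) * m₃)) * hid1
      - ((m₁:ℝ) * ((m₁:ℝ) * m₂ + (m₁:ℝ) * m₃ + (m₂:ℝ) * m₃)) * hjd2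
      + ((m₃:ℝ) * ((m₂:ℝ) * i - (m₁:ℝ) * j)) * hd3
  have hgoal : (i:ℝ) * (g₁ 1 - g₁ 0) - (j:ℝ) * (g₂ 1 - g₂ 0)
      = ((m₂ : ℝ) * i * ((m₁ : ℝ) - i) + (m₃ : ℝ) * ((i : ℝ) + j) * (((m₁ : ℝ) - i) + ((m₂ : ℝ) - j))
          + (m₁ : ℝ) * j * ((m₂ : ℝ) - j))
        / ((m₁ : ℝ) * m₂ + (m₁ : ℝ) * m₃ + (m₂ : ℝ) * m₃) := by
    rw [eq_div_iff hM]
    exact mul_left_cancel₀ (ne_of_gt hm2R) (mul_left_cancel₀ (ne_of_gt hm1R) key)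
  linear_combination F1 - F2 + hA1 + hgoal
end

section
/- Let m₁, m₂, m₃ ≥ 1 and M := m₁m₂ + m₁m₃ + m₂m₃. Then for all integers 0 ≤ i ≤ m₁ and 0 ≤ j ≤ m₂, ( m₂·i·(m₁-i) + m₃·(i+j)·(m₁-i+m₂-j) + m₁·j·(m₂-j) ) / M ≤ (m₁ + m₂)/4. In particular, if additionally m₃ ≤ m₁ and m₃ ≤ m₂, this quantity is strictly less than (m₁ + m₂ + m₃)/4. -/
/-- The bound behind Corollary "Case3Bds"(a): for `m₁, m₂, m₃ ≥ 1`,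
`M = m₁m₂ + m₁m₃ + m₂m₃`, and integers `0 ≤ i ≤ m₁`, `0 ≤ j ≤ m₂`, the quantity
`(m₂·i·(m₁-i) + m₃·(i+j)·(m₁-i+m₂-j) + m₁·j·(m₂-j))/M` is at most `(m₁+m₂)/4`;
if moreover `m₃ ≤ m₁` and `m₃ ≤ m₂`, it is strictly less than `(m₁+m₂+m₃)/4`. -/
theorem three_nodes_mu_bound
    (m₁ m₂ m₃ i j : ℤ)
    (hm₁ : 1 ≤ m₁) (hm₂ : 1 ≤ m₂) (hm₃ : 1 ≤ m₃)
    (hi0 : 0 ≤ i) (hi1 : i ≤ m₁) (hj0 : 0 ≤ j) (hj1 : j ≤ m₂) :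
    ((m₂ : ℝ) * i * ((m₁ : ℝ) - i) + (m₃ : ℝ) * ((i : ℝ) + j) * (((m₁ : ℝ) - i) + ((m₂ : ℝ) - j))
        + (m₁ : ℝ) * j * ((m₂ : ℝ) - j))
      / ((m₁ : ℝ) * m₂ + (m₁ : ℝ) * m₃ + (m₂ : ℝ) * m₃)
      ≤ ((m₁ : ℝ) + m₂) / 4 ∧
    (m₃ ≤ m₁ → m₃ ≤ m₂ →
      ((m₂ : ℝ) * i * ((m₁ : ℝ) - i) + (m₃ : ℝ) * ((i : ℝ) + j) * (((m₁ : ℝ) - i) + ((m₂ : ℝ) - j))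
          + (m₁ : ℝ) * j * ((m₂ : ℝ) - j))
        / ((m₁ : ℝ) * m₂ + (m₁ : ℝ) * m₃ + (m₂ : ℝ) * m₃)
        < ((m₁ : ℝ) + m₂ + m₃) / 4) := by
  have a1 : (1 : ℝ) ≤ m₁ := by exact_mod_cast hm₁
  have a2 : (1 : ℝ) ≤ m₂ := by exact_mod_cast hm₂
  have a3 : (1 : ℝ) ≤ m₃ := by exact_mod_cast hm₃
  have hM : (0 : ℝ) < (m₁ : ℝ) * m₂ + (m₁ : ℝ) * m₃ + (m₂ : ℝ) * m₃ := by nlinarith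
  have key : ((m₂ : ℝ) * i * ((m₁ : ℝ) - i) + (m₃ : ℝ) * ((i : ℝ) + j) * (((m₁ : ℝ) - i) + ((m₂ : ℝ) - j))
        + (m₁ : ℝ) * j * ((m₂ : ℝ) - j))
      / ((m₁ : ℝ) * m₂ + (m₁ : ℝ) * m₃ + (m₂ : ℝ) * m₃)
      ≤ ((m₁ : ℝ) + m₂) / 4 := by
    rw [div_le_div_iff₀ hM (by norm_num)]
    nlinarith [mul_nonneg (by linarith : (0:ℝ) ≤ (m₂:ℝ)) (sq_nonneg ((m₁:ℝ) - 2*i)),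
      mul_nonneg (by linarith : (0:ℝ) ≤ (m₃:ℝ)) (sq_nonneg ((m₁:ℝ) + m₂ - 2*i - 2*j)),
      mul_nonneg (by linarith : (0:ℝ) ≤ (m₁:ℝ)) (sq_nonneg ((m₂:ℝ) - 2*j))]
  refine ⟨key, fun _ _ => lt_of_le_of_lt key (by linarith)⟩
end
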